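/- Let D ∈ ℝ^{m×p}, J ⊆ {1,…,p} such that D_JᵀD_J is invertible, s ∈ {−1,1}^J a sign vector supported on J, λ > 0, and x ∈ ℝ^m. If sign(D_J⁺x − λ(D_JᵀD_J)^{-1}s) = s and ‖D_{J^c}ᵀ(I − P_J(D))x‖_∞ + λ·|||D_{J^c}ᵀD_J(D_JᵀD_J)^{-1}|||_∞ < λ, then α̂_x(D|s) is the unique minimizer over ℝ^p of α ↦ ½‖x − Dα‖₂² + λ‖α‖₁, and sign(α̂_x(D|s)_J) = s. -/

import Mathlib

open MeasureTheory Matrix Finset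
open scoped ENNReal NNReal

noncomputable section

/-- squared ℓ² norm of a vector -/
def l2sq {n : Type*} [Fintype n] (v : n → ℝ) : ℝ := ∑ i, v i ^ 2

/-- ℓ² norm of a vector -/
def l2 {n : Type*} [Fintype n] (v : n → ℝ) : ℝ := Real.sqrt (l2sq v)

/-- ℓ¹ norm of a vector -/
def l1 {n : Type*} [Fintype n] (v : n → ℝ) : ℝ := ∑ i, |v i|

/-- ℓ^∞ (sup) norm of a vector -/
def linf {n : Type*} (v : n → ℝ) : ℝ := sSup (Set.range fun i => |v i|)

/-- squared Frobenius norm -/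
def frobSq {n q : Type*} [Fintype n] [Fintype q] (A : Matrix n q ℝ) : ℝ :=
  ∑ i, ∑ j, A i j ^ 2

/-- Frobenius norm -/
def frob {n q : Type*} [Fintype n] [Fintype q] (A : Matrix n q ℝ) : ℝ :=
  Real.sqrt (frobSq A)

/-- spectral (operator ℓ²→ℓ²) norm -/
def spec {n q : Type*} [Fintype n] [Fintype q] (A : Matrix n q ℝ) : ℝ :=
  sSup {t : ℝ | ∃ x : q → ℝ, l2 x ≤ 1 ∧ t = l2 (A.mulVec x)}

/-- operator ℓ∞→ℓ∞ norm: max row sum of absolute values -/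
def opInf {n q : Type*} [Fintype q] (A : Matrix n q ℝ) : ℝ :=
  sSup (Set.range fun i => ∑ j, |A i j|)

/-- j-th column of a matrix -/
def col {m p : ℕ} (D : Matrix (Fin m) (Fin p) ℝ) (j : Fin p) : Fin m → ℝ :=
  fun i => D i j

/-- the oblique manifold: matrices with unit ℓ²-norm columns -/
def Oblique {m p : ℕ} (D : Matrix (Fin m) (Fin p) ℝ) : Prop :=
  ∀ j, l2sq (_root_.col D j) = 1

/-- cumulative coherence μ_k -/
def mu {m p : ℕ} (k : ℕ) (D : Matrix (Fin m) (Fin p) ℝ) : ℝ :=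
  sSup {t : ℝ | ∃ J : Finset (Fin p), J.card ≤ k ∧ ∃ j, j ∉ J ∧
    t = ∑ i ∈ J, |∑ r, D r i * D r j|}

/-- lower restricted isometry constant δ̲_k -/
def deltaLow {m p : ℕ} (k : ℕ) (D : Matrix (Fin m) (Fin p) ℝ) : ℝ :=
  sInf {δ : ℝ | 0 ≤ δ ∧ ∀ J : Finset (Fin p), J.card = k →
    ∀ z : Fin p → ℝ, (∀ i, i ∉ J → z i = 0) →
      (1 - δ) * l2sq z ≤ l2sq (D.mulVec z)}

/-- upper restricted isometry constant δ̄_k -/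
def deltaUp {m p : ℕ} (k : ℕ) (D : Matrix (Fin m) (Fin p) ℝ) : ℝ :=
  sInf {δ : ℝ | 0 ≤ δ ∧ ∀ J : Finset (Fin p), J.card = k →
    ∀ z : Fin p → ℝ, (∀ i, i ∉ J → z i = 0) →
      l2sq (D.mulVec z) ≤ (1 + δ) * l2sq z}

/-- submatrix D_J of the columns indexed by J -/
def colsub {m p : ℕ} (D : Matrix (Fin m) (Fin p) ℝ) (J : Finset (Fin p)) :
    Matrix (Fin m) J ℝ := fun i j => D i j.1

/-- Gram matrix D_Jᵀ D_J -/
def gram {m p : ℕ} (D : Matrix (Fin m) (Fin p) ℝ) (J : Finset (Fin p)) :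
    Matrix J J ℝ := (colsub D J)ᵀ * colsub D J

/-- Θ_J(D) = (D_Jᵀ D_J)⁻¹ -/
def theta {m p : ℕ} (D : Matrix (Fin m) (Fin p) ℝ) (J : Finset (Fin p)) :
    Matrix J J ℝ := (gram D J)⁻¹

/-- pseudo-inverse D_J⁺ = Θ_J D_Jᵀ -/
def pinv {m p : ℕ} (D : Matrix (Fin m) (Fin p) ℝ) (J : Finset (Fin p)) :
    Matrix J (Fin m) ℝ := theta D J * (colsub D J)ᵀ

/-- orthogonal projector P_J(D) = D_J Θ_J D_Jᵀ -/
def proj {m p : ℕ} (D : Matrix (Fin m) (Fin p) ℝ) (J : Finset (Fin p)) :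
    Matrix (Fin m) (Fin m) ℝ := colsub D J * pinv D J

/-- Lasso objective L_x(D, α) -/
def lasso {m p : ℕ} (lam : ℝ) (x : Fin m → ℝ) (D : Matrix (Fin m) (Fin p) ℝ)
    (a : Fin p → ℝ) : ℝ :=
  (1/2) * l2sq (fun i => x i - D.mulVec a i) + lam * l1 a

/-- f_x(D) = inf_α L_x(D, α) -/
def fobj {m p : ℕ} (lam : ℝ) (x : Fin m → ℝ) (D : Matrix (Fin m) (Fin p) ℝ) : ℝ :=
  ⨅ a : Fin p → ℝ, lasso lam x D a

/-- φ_x(D|s) for a sign vector s with support J -/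
def phi {m p : ℕ} (lam : ℝ) (x : Fin m → ℝ) (D : Matrix (Fin m) (Fin p) ℝ)
    (J : Finset (Fin p)) (s : Fin p → ℝ) : ℝ :=
  (1/2) * (l2sq x - ∑ a : J, ∑ b : J,
    ((colsub D J)ᵀ.mulVec x a - lam * s a.1) * theta D J a b
      * ((colsub D J)ᵀ.mulVec x b - lam * s b.1))

/-- α̂_x(D|s): the closed-form candidate minimizer with sign pattern s and support J -/
def alphaHat {m p : ℕ} (lam : ℝ) (x : Fin m → ℝ) (D : Matrix (Fin m) (Fin p) ℝ)
    (J : Finset (Fin p)) (s : Fin p → ℝ) : Fin p → ℝ :=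
  fun i => if h : i ∈ J then
    (pinv D J).mulVec x ⟨i, h⟩ - lam * (theta D J).mulVec (fun a => s a.1) ⟨i, h⟩
  else 0

/-- sign vector of a coefficient vector -/
def sgnv {p : ℕ} (a : Fin p → ℝ) : Fin p → ℝ := fun i => Real.sign (a i)

/-- the noisy signal x = D° α° + ε -/
def xsig {m p : ℕ} (Do : Matrix (Fin m) (Fin p) ℝ) (a : Fin p → ℝ) (e : Fin m → ℝ) :
    Fin m → ℝ := fun i => Do.mulVec a i + e i

/-- average over all subsets J ⊆ {1,…,p} of size k -/
def EJ {p : ℕ} (k : ℕ) (f : Finset (Fin p) → ℝ) : ℝ :=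
  ((p.choose k : ℝ))⁻¹ * ∑ S ∈ Finset.powersetCard k (Finset.univ : Finset (Fin p)), f S

/-- the constant C_min -/
def CminV {m p : ℕ} (k : ℕ) (Do : Matrix (Fin m) (Fin p) ℝ) (Ea2 Ea1 : ℝ) : ℝ :=
  24 * (Ea1 / Real.sqrt Ea2) ^ 2 * (spec Do + 1) * ((k : ℝ) / (p : ℝ)) *
    frob (Doᵀ * Do - (1 : Matrix (Fin p) (Fin p) ℝ))

/-- the constant C_max -/
def CmaxV {m p : ℕ} (k : ℕ) (Do : Matrix (Fin m) (Fin p) ℝ) (Ea1 Malpha : ℝ) : ℝ :=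
  (2/7) * (Ea1 / Malpha) * (1 - 2 * mu k Do)

/-- The Basic signal model (Assumption 1 together with the generative mechanism):
J is uniform over size-k supports, α° is supported on J with white coefficients and signs,
and the noise is decorrelated from the coefficients and white.  Conditional expectations given
J are expressed as integrals over the events {J = S}. -/
structure IsBasicModel {m p : ℕ} (k : ℕ) {Ω : Type*} [MeasurableSpace Ω] (μ : Measure Ω)
    (Jv : Ω → Finset (Fin p)) (av : Ω → Fin p → ℝ) (ev : Ω → Fin m → ℝ)
    (Ea2 Ea1 Ee2 : ℝ) : Prop where
  prob : IsProbabilityMeasure μ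
  measJ : ∀ S : Finset (Fin p), MeasurableSet {ω | Jv ω = S}
  measa : ∀ i, Measurable fun ω => av ω i
  mease : ∀ i, Measurable fun ω => ev ω i
  Ea2_pos : 0 < Ea2
  Ea1_pos : 0 < Ea1
  unif : ∀ S : Finset (Fin p), S.card = k →
    μ {ω | Jv ω = S} = ((p.choose k : ℝ≥0∞))⁻¹
  support : ∀ᵐ ω ∂μ, ∀ i, i ∉ Jv ω → av ω i = 0
  coeffWhite : ∀ S : Finset (Fin p), S.card = k → ∀ i ∈ S, ∀ j ∈ S,
    ∫ ω in {ω | Jv ω = S}, av ω i * av ω j ∂μ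
      = (if i = j then Ea2 else 0) * (μ {ω | Jv ω = S}).toReal
  signWhite : ∀ S : Finset (Fin p), S.card = k → ∀ i ∈ S, ∀ j ∈ S,
    ∫ ω in {ω | Jv ω = S}, Real.sign (av ω i) * Real.sign (av ω j) ∂μ
      = (if i = j then 1 else 0) * (μ {ω | Jv ω = S}).toReal
  coeffSign : ∀ S : Finset (Fin p), S.card = k → ∀ i ∈ S, ∀ j ∈ S,
    ∫ ω in {ω | Jv ω = S}, av ω i * Real.sign (av ω j) ∂μ
      = (if i = j then Ea1 else 0) * (μ {ω | Jv ω = S}).toReal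
  noiseCoeff : ∀ S : Finset (Fin p), S.card = k → ∀ i : Fin m, ∀ j ∈ S,
    ∫ ω in {ω | Jv ω = S}, ev ω i * av ω j ∂μ = 0
  noiseSign : ∀ S : Finset (Fin p), S.card = k → ∀ i : Fin m, ∀ j ∈ S,
    ∫ ω in {ω | Jv ω = S}, ev ω i * Real.sign (av ω j) ∂μ = 0
  noiseWhite : ∀ S : Finset (Fin p), S.card = k → ∀ i j : Fin m,
    ∫ ω in {ω | Jv ω = S}, ev ω i * ev ω j ∂μ
      = (if i = j then Ee2 else 0) * (μ {ω | Jv ω = S}).toReal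

/-- The Bounded signal model (Assumption 2): almost sure lower bound on nonzero coefficients,
and almost sure ℓ² bounds on the coefficient vector and the noise. -/
structure IsBoundedModel {m p : ℕ} {Ω : Type*} [MeasurableSpace Ω] (μ : Measure Ω)
    (Jv : Ω → Finset (Fin p)) (av : Ω → Fin p → ℝ) (ev : Ω → Fin m → ℝ)
    (alphaMin Malpha Meps : ℝ) : Prop where
  alphaMin_pos : 0 < alphaMin
  Malpha_pos : 0 < Malpha
  coeffFloor : ∀ᵐ ω ∂μ, ∀ i ∈ Jv ω, alphaMin ≤ |av ω i|
  coeffBound : ∀ᵐ ω ∂μ, l2 (av ω) ≤ Malpha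
  noiseBound : ∀ᵐ ω ∂μ, l2 (ev ω) ≤ Meps

end

/-!
Let `α = α̂_x(D|s)` and `g = Dᵀ(x - Dα)`. For every `a`,
`L(a) - L(α) = ½‖D(a - α)‖² + Σ_j (λ|a_j| - λ|α_j| - g_j (a_j - α_j))`,
and every summand is nonnegative as soon as `g ∈ λ ∂‖α‖₁`. The normal equations give
`g_J = λ s`, while `g_{Jᶜ} = D_{Jᶜ}ᵀ(I - P_J)x + λ D_{Jᶜ}ᵀ D_J Θ_J s` has sup-norm `< λ` by the
irrepresentability hypothesis. Hence a competitor `a ≠ α` either has a coordinate off `J` where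
it differs from `α`, making a summand positive, or differs from `α` only on `J`, where `D` is
injective because `D_Jᵀ D_J` is invertible, making the quadratic term positive.
-/

open Matrix

section Norms

variable {ι : Type*}

lemma l2sq_eq_dotProduct [Fintype ι] (v : ι → ℝ) : l2sq v = v ⬝ᵥ v := by
  simp only [l2sq, dotProduct, sq]

lemma l2sq_nonneg [Fintype ι] (v : ι → ℝ) : 0 ≤ l2sq v :=
  Finset.sum_nonneg fun _ _ => sq_nonneg _

lemma l2sq_pos [Fintype ι] {v : ι → ℝ} (hv : v ≠ 0) : 0 < l2sq v :=
  (l2sq_nonneg v).lt_of_ne' (by rw [l2sq_eq_dotProduct]; exact dotProduct_self_eq_zero.not.mpr hv)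

lemma abs_le_linf [Finite ι] (v : ι → ℝ) (i : ι) : |v i| ≤ linf v :=
  le_csSup (Set.finite_range _).bddAbove ⟨i, rfl⟩

lemma abs_mulVec_le_opInf {n : Type*} [Finite n] [Fintype ι] (A : Matrix n ι ℝ) {v : ι → ℝ}
    (hv : ∀ c, |v c| ≤ 1) (i : n) : |(A *ᵥ v) i| ≤ opInf A :=
  calc |(A *ᵥ v) i| ≤ ∑ c, |A i c * v c| := Finset.abs_sum_le_sum_abs _ _
    _ ≤ ∑ c, |A i c| := Finset.sum_le_sum fun c _ => by
        rw [abs_mul]; exact mul_le_of_le_one_right (abs_nonneg _) (hv c)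
    _ ≤ opInf A := le_csSup (Set.finite_range _).bddAbove ⟨i, rfl⟩

end Norms

section Subgradient

variable {lam g b a : ℝ}

lemma subgradient_gap_nonneg (hg : |g| ≤ lam) (hb : g * b = lam * |b|) :
    0 ≤ lam * |a| - lam * |b| - g * (a - b) := by
  have : g * a ≤ |g| * |a| := by rw [← abs_mul]; exact le_abs_self _
  nlinarith [abs_nonneg a]

lemma subgradient_gap_pos (hg : |g| < lam) (hb : g * b = lam * |b|) (hab : a ≠ b) :
    0 < lam * |a| - lam * |b| - g * (a - b) := by
  have hgb : g * b ≤ |g| * |b| := by rw [← abs_mul]; exact le_abs_self _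
  have hb0 : b = 0 := abs_eq_zero.mp (by nlinarith [abs_nonneg b])
  subst hb0
  have hga : g * a ≤ |g| * |a| := by rw [← abs_mul]; exact le_abs_self _
  nlinarith [abs_pos.mpr hab]

end Subgradient

section Lasso

variable {m p : ℕ}

lemma lasso_eq_add (lam : ℝ) (x : Fin m → ℝ) (D : Matrix (Fin m) (Fin p) ℝ)
    (α a : Fin p → ℝ) :
    lasso lam x D a = lasso lam x D α + (1 / 2) * l2sq (D *ᵥ (a - α)) +
      ∑ j, (lam * |a j| - lam * |α j| - (Dᵀ *ᵥ (x - D *ᵥ α)) j * (a j - α j)) := by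
  have hres : (fun i => x i - (D *ᵥ a) i) = (x - D *ᵥ α) - D *ᵥ (a - α) := by
    rw [mulVec_sub]; ext i; simp only [Pi.sub_apply]; ring
  have hsum : ∑ j, (lam * |a j| - lam * |α j| - (Dᵀ *ᵥ (x - D *ᵥ α)) j * (a j - α j)) =
      lam * l1 a - lam * l1 α - Dᵀ *ᵥ (x - D *ᵥ α) ⬝ᵥ (a - α) := by
    simp only [Finset.sum_sub_distrib, ← Finset.mul_sum, l1, dotProduct, Pi.sub_apply]
  rw [hsum]
  simp only [lasso, hres, l2sq_eq_dotProduct]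
  change _ = (1 / 2) * ((x - D *ᵥ α) ⬝ᵥ (x - D *ᵥ α)) + _ + _ + _
  generalize x - D *ᵥ α = r
  generalize a - α = h
  rw [mulVec_transpose, ← dotProduct_mulVec, sub_dotProduct, dotProduct_sub, dotProduct_sub,
    dotProduct_comm (D *ᵥ h) r]
  ring

theorem lasso_lt_of_subgradient {lam : ℝ} {x : Fin m → ℝ} {D : Matrix (Fin m) (Fin p) ℝ}
    (J : Finset (Fin p)) {α : Fin p → ℝ}
    (hJ : ∀ j ∈ J, |(Dᵀ *ᵥ (x - D *ᵥ α)) j| ≤ lam)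
    (hJc : ∀ j ∉ J, |(Dᵀ *ᵥ (x - D *ᵥ α)) j| < lam)
    (hα : ∀ j, (Dᵀ *ᵥ (x - D *ᵥ α)) j * α j = lam * |α j|)
    (hinj : ∀ v : Fin p → ℝ, (∀ j ∉ J, v j = 0) → D *ᵥ v = 0 → v = 0)
    {a : Fin p → ℝ} (hne : a ≠ α) : lasso lam x D α < lasso lam x D a := by
  set g := Dᵀ *ᵥ (x - D *ᵥ α)
  have hgap : ∀ j, 0 ≤ lam * |a j| - lam * |α j| - g j * (a j - α j) := fun j => by
    by_cases hj : j ∈ J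
    · exact subgradient_gap_nonneg (hJ j hj) (hα j)
    · exact subgradient_gap_nonneg (hJc j hj).le (hα j)
  rw [lasso_eq_add lam x D α a]
  by_cases hoff : ∃ j ∉ J, a j ≠ α j
  · obtain ⟨j, hj, haj⟩ := hoff
    have hsum : 0 < ∑ j, (lam * |a j| - lam * |α j| - g j * (a j - α j)) :=
      Finset.sum_pos' (fun j _ => hgap j)
        ⟨j, Finset.mem_univ _, subgradient_gap_pos (hJc j hj) (hα j) haj⟩
    linarith [l2sq_nonneg (D *ᵥ (a - α))]
  · push Not at hoff
    have hDv : D *ᵥ (a - α) ≠ 0 := fun h0 =>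
      sub_ne_zero.mpr hne (hinj _ (fun j hj => sub_eq_zero.mpr (hoff j hj)) h0)
    have hsum : 0 ≤ ∑ j, (lam * |a j| - lam * |α j| - g j * (a j - α j)) :=
      Finset.sum_nonneg fun j _ => hgap j
    linarith [l2sq_pos hDv]

end Lasso

namespace Real

lemma sign_mul_self_eq_abs (r : ℝ) : sign r * r = |r| := by
  rcases lt_trichotomy r 0 with h | rfl | h
  · rw [sign_of_neg h, abs_of_neg h, neg_one_mul]
  · rw [sign_zero, zero_mul, abs_zero]
  · rw [sign_of_pos h, abs_of_pos h, one_mul]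

lemma abs_sign_le_one (r : ℝ) : |sign r| ≤ 1 := by
  rcases sign_apply_eq r with h | h | h <;> simp [h]

end Real

section Candidate

variable {m p : ℕ} (D : Matrix (Fin m) (Fin p) ℝ) (J : Finset (Fin p))

lemma mulVec_eq_colsub_mulVec {v : Fin p → ℝ} (hv : ∀ j ∉ J, v j = 0) :
    D *ᵥ v = colsub D J *ᵥ fun b : J => v b := by
  ext i
  simp only [mulVec, dotProduct, colsub]
  rw [Finset.sum_coe_sort J (fun j => D i j * v j)]
  exact (Finset.sum_subset (Finset.subset_univ J) fun j _ hj => by rw [hv j hj, mul_zero]).symm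

lemma eq_zero_of_mulVec_eq_zero_of_isUnit_gram (hinv : IsUnit (gram D J)) {v : Fin p → ℝ}
    (hv : ∀ j ∉ J, v j = 0) (hDv : D *ᵥ v = 0) : v = 0 := by
  have hGv : gram D J *ᵥ (fun b : J => v b) = gram D J *ᵥ 0 := by
    rw [_root_.gram, ← mulVec_mulVec, ← mulVec_eq_colsub_mulVec D J hv, hDv, mulVec_zero,
      mulVec_zero]
  have hvJ := mulVec_injective_iff_isUnit.mpr hinv hGv
  ext j
  by_cases hj : j ∈ J
  · exact congrFun hvJ ⟨j, hj⟩
  · exact hv j hj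

lemma transpose_mulVec_apply_eq_colsub (K : Finset (Fin p)) (r : Fin m → ℝ) {j : Fin p}
    (hj : j ∈ K) : (Dᵀ *ᵥ r) j = ((colsub D K)ᵀ *ᵥ r) ⟨j, hj⟩ :=
  rfl

lemma proj_mulVec (x : Fin m → ℝ) :
    proj D J *ᵥ x = colsub D J *ᵥ (theta D J *ᵥ ((colsub D J)ᵀ *ᵥ x)) := by
  rw [proj, pinv, mulVec_mulVec, mulVec_mulVec, Matrix.mul_assoc]

lemma colsub_transpose_mulVec_colsub_theta (hinv : IsUnit (gram D J)) (y : J → ℝ) :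
    (colsub D J)ᵀ *ᵥ (colsub D J *ᵥ (theta D J *ᵥ y)) = y := by
  rw [mulVec_mulVec, mulVec_mulVec, ← _root_.gram, theta,
    mul_nonsing_inv _ ((isUnit_iff_isUnit_det _).mp hinv), one_mulVec]

variable (lam : ℝ) (x : Fin m → ℝ) (s : Fin p → ℝ)

lemma alphaHat_of_not_mem {j : Fin p} (hj : j ∉ J) : alphaHat lam x D J s j = 0 :=
  dif_neg hj

lemma residual_alphaHat :
    x - D *ᵥ alphaHat lam x D J s =
      (x - proj D J *ᵥ x) + lam • (colsub D J *ᵥ (theta D J *ᵥ fun b : J => s b)) := by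
  have hrestrict : (fun b : J => alphaHat lam x D J s b) =
      theta D J *ᵥ ((colsub D J)ᵀ *ᵥ x) - lam • theta D J *ᵥ fun b : J => s b := by
    ext b
    simp [alphaHat, b.2, pinv, ← mulVec_mulVec]
  rw [mulVec_eq_colsub_mulVec D J fun j hj => alphaHat_of_not_mem D J lam x s hj, hrestrict,
    mulVec_sub, mulVec_smul, proj_mulVec]
  abel

lemma transpose_mulVec_residual_alphaHat_of_mem (hinv : IsUnit (gram D J)) {j : Fin p}
    (hj : j ∈ J) : (Dᵀ *ᵥ (x - D *ᵥ alphaHat lam x D J s)) j = lam * s j := by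
  rw [transpose_mulVec_apply_eq_colsub D J _ hj, residual_alphaHat, mulVec_add, mulVec_sub,
    mulVec_smul, proj_mulVec, colsub_transpose_mulVec_colsub_theta D J hinv,
    colsub_transpose_mulVec_colsub_theta D J hinv]
  simp

lemma abs_transpose_mulVec_residual_alphaHat_le (hlam : 0 ≤ lam) (hs : ∀ i ∈ J, |s i| ≤ 1)
    {j : Fin p} (hj : j ∉ J) :
    |(Dᵀ *ᵥ (x - D *ᵥ alphaHat lam x D J s)) j| ≤
      linf ((colsub D Jᶜ)ᵀ *ᵥ (x - proj D J *ᵥ x)) +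
        lam * opInf ((colsub D Jᶜ)ᵀ * colsub D J * theta D J) := by
  have hjc : j ∈ Jᶜ := Finset.mem_compl.mpr hj
  rw [transpose_mulVec_apply_eq_colsub D Jᶜ _ hjc, residual_alphaHat, mulVec_add, mulVec_smul,
    mulVec_mulVec, mulVec_mulVec, Pi.add_apply, Pi.smul_apply, smul_eq_mul]
  refine (abs_add_le _ _).trans (add_le_add (abs_le_linf _ _) ?_)
  rw [abs_mul, abs_of_nonneg hlam]
  exact mul_le_mul_of_nonneg_left (abs_mulVec_le_opInf _ (fun b : J => hs b b.2) _) hlam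

end Candidate

theorem stmt11_general {m p : ℕ} (D : Matrix (Fin m) (Fin p) ℝ) (J : Finset (Fin p))
    (hinv : IsUnit (gram D J)) (s : Fin p → ℝ)
    (lam : ℝ) (hlam : 0 < lam) (x : Fin m → ℝ)
    (hsign : ∀ i ∈ J, Real.sign (alphaHat lam x D J s i) = s i)
    (hirr : linf (fun a : (Jᶜ : Finset (Fin p)) =>
              ∑ r, D r a.1 * (x r - (proj D J).mulVec x r))
            + lam * opInf ((colsub D (Jᶜ : Finset (Fin p)))ᵀ * colsub D J * theta D J)
          < lam) :
    (∀ a : Fin p → ℝ, a ≠ alphaHat lam x D J s →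
      lasso lam x D (alphaHat lam x D J s) < lasso lam x D a) ∧
    (∀ i ∈ J, Real.sign (alphaHat lam x D J s i) = s i) := by
  have hs : ∀ i ∈ J, |s i| ≤ 1 := fun i hi => hsign i hi ▸ Real.abs_sign_le_one _
  have hgradJ : ∀ j ∈ J, (Dᵀ *ᵥ (x - D *ᵥ alphaHat lam x D J s)) j = lam * s j :=
    fun j hj => transpose_mulVec_residual_alphaHat_of_mem D J lam x s hinv hj
  refine ⟨fun a hne => lasso_lt_of_subgradient J (fun j hj => ?_) (fun j hj => ?_) (fun j => ?_)
    (fun v => eq_zero_of_mulVec_eq_zero_of_isUnit_gram D J hinv) hne, hsign⟩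
  · rw [hgradJ j hj, abs_mul, abs_of_pos hlam]
    exact mul_le_of_le_one_right hlam.le (hs j hj)
  · exact (abs_transpose_mulVec_residual_alphaHat_le D J lam x s hlam.le hs hj).trans_lt hirr
  · by_cases hj : j ∈ J
    · rw [hgradJ j hj, ← hsign j hj, mul_assoc, Real.sign_mul_self_eq_abs]
    · rw [alphaHat_of_not_mem D J lam x s hj, mul_zero, abs_zero, mul_zero]

/-- Lemma (unique Lasso minimizer with prescribed sign): if the candidate α̂_x(D|s) has sign s
on J and the irrepresentability-type condition holds on J^c, then α̂_x(D|s) is the unique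
minimizer of the Lasso and its sign on J is s. -/
theorem stmt11 {m p : ℕ} (D : Matrix (Fin m) (Fin p) ℝ) (J : Finset (Fin p))
    (hinv : IsUnit (gram D J)) (s : Fin p → ℝ)
    (hs1 : ∀ i ∈ J, s i = 1 ∨ s i = -1) (hs0 : ∀ i, i ∉ J → s i = 0)
    (lam : ℝ) (hlam : 0 < lam) (x : Fin m → ℝ)
    (hsign : ∀ i ∈ J, Real.sign (alphaHat lam x D J s i) = s i)
    (hirr : linf (fun a : (Jᶜ : Finset (Fin p)) =>
              ∑ r, D r a.1 * (x r - (proj D J).mulVec x r))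
            + lam * opInf ((colsub D (Jᶜ : Finset (Fin p)))ᵀ * colsub D J * theta D J)
          < lam) :
    (∀ a : Fin p → ℝ, a ≠ alphaHat lam x D J s →
      lasso lam x D (alphaHat lam x D J s) < lasso lam x D a) ∧
    (∀ i ∈ J, Real.sign (alphaHat lam x D J s i) = s i) :=
  stmt11_general D J hinv s lam hlam x hsign hirr
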